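/- arXiv:2402.15399 — 4 statements merged into one kernel-verified Lean document; each statement's English description precedes it below -/
import Mathlib

section
/- For any probability measure μ⁰ on a finite state space S, uncertainty level ρ ≥ 0, and function V : S → [0, H] with min_s V(s) = 0, the distributionally robust expectation under the total-variation uncertainty set satisfies: inf over μ ∈ Δ(S) with D_TV(μ‖μ⁰) ≤ ρ of E_{s∼μ}[V(s)] equals max over α ∈ [0, H] of ( E_{s∼μ⁰}[min(V(s), α)] − ρα ). -/
/-!
Weak duality: for every α ≥ 0, replacing `V` by `min V α` can only lower the mean under `μ` and, since
`min V α` ranges over an interval of length `α`, changing `μ⁰` into `μ` moves its mean by at most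
`α · D_TV(μ‖μ⁰) ≤ ρ α`.

Strong duality: choose the threshold `α` so that `μ⁰(V > α) ≤ ρ ≤ μ⁰(V ≥ α)` (or `α = 0`), and
move a mass `min(μ⁰(V ≥ α), ρ)` of `μ⁰`, all of it taken from `{V ≥ α}` and including all of
`{V > α}`, to a state where `V = 0`. The resulting `μ` attains the dual value at `α`.
-/

open Finset

section

variable {S : Type*} [Fintype S]

lemma sum_sub_mul_le_half_mul_sum_abs {μ ν f : S → ℝ} {a : ℝ} (hsum : ∑ s, μ s = ∑ s, ν s)
    (hf : ∀ s, f s ∈ Set.Icc 0 a) :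
    ∑ s, (ν s - μ s) * f s ≤ a / 2 * ∑ s, |μ s - ν s| := by
  have hcenter : ∑ s, (ν s - μ s) * f s = ∑ s, (ν s - μ s) * (f s - a / 2) := by
    have hzero : ∑ s, (ν s - μ s) = 0 := by rw [sum_sub_distrib, hsum, sub_self]
    simp only [mul_sub, sum_sub_distrib, ← sum_mul, hzero, zero_mul, sub_zero]
  rw [hcenter, mul_sum]
  refine sum_le_sum fun s _ => ?_
  have hdev : |f s - a / 2| ≤ a / 2 :=
    abs_le.2 ⟨by linarith [(hf s).1], by linarith [(hf s).2]⟩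
  calc (ν s - μ s) * (f s - a / 2) ≤ |ν s - μ s| * |f s - a / 2| := by
        rw [← abs_mul]; exact le_abs_self _
    _ ≤ |μ s - ν s| * (a / 2) := by rw [abs_sub_comm]; gcongr
    _ = a / 2 * |μ s - ν s| := mul_comm _ _

lemma sum_mul_min_sub_le_sum_mul {μ0 μ V : S → ℝ} {ρ α : ℝ} (hα : 0 ≤ α) (hV : ∀ s, 0 ≤ V s)
    (hμ : ∀ s, 0 ≤ μ s) (hsum : ∑ s, μ s = ∑ s, μ0 s)
    (htv : 1 / 2 * ∑ s, |μ s - μ0 s| ≤ ρ) :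
    ∑ s, μ0 s * min (V s) α - ρ * α ≤ ∑ s, μ s * V s := by
  have hshift := sum_sub_mul_le_half_mul_sum_abs (f := fun s => min (V s) α) hsum
    fun s => ⟨le_min (hV s) hα, min_le_right _ _⟩
  have hmono : ∑ s, μ s * min (V s) α ≤ ∑ s, μ s * V s :=
    sum_le_sum fun s _ => mul_le_mul_of_nonneg_left (min_le_left _ _) (hμ s)
  simp only [sub_mul, sum_sub_distrib] at hshift
  nlinarith [mul_le_mul_of_nonneg_right htv hα]

lemma exists_threshold (μ0 f : S → ℝ) {ρ : ℝ} (hρ : 0 ≤ ρ) (hf : ∀ s, 0 ≤ f s) :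
    ∃ α, (α = 0 ∨ α ∈ Set.range f) ∧ ∑ s with α < f s, μ0 s ≤ ρ ∧
      (α = 0 ∨ ρ ≤ ∑ s with α ≤ f s, μ0 s) := by
  classical
  set A : Finset ℝ := insert 0 (univ.image f)
  have hfA : ∀ s, f s ∈ A := fun s => mem_insert_of_mem (mem_image_of_mem f (mem_univ s))
  set C := A.filter fun b => ∑ s with b < f s, μ0 s ≤ ρ
  have hC : C.Nonempty := by
    refine ⟨A.max' ⟨0, mem_insert_self _ _⟩, mem_filter.2 ⟨max'_mem _ _, ?_⟩⟩
    rwa [filter_false_of_mem fun s _ => not_lt.2 (le_max' A _ (hfA s)), sum_empty]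
  set α := C.min' hC
  obtain ⟨hαA, hα⟩ := mem_filter.1 (C.min'_mem hC)
  have hαrange : α = 0 ∨ α ∈ Set.range f := by simpa [A, eq_comm] using hαA
  refine ⟨α, hαrange, hα, ?_⟩
  have hα0 : 0 ≤ α := by rcases hαrange with h | ⟨s, h⟩; exacts [h.ge, h ▸ hf s]
  rcases hα0.eq_or_lt with h0 | hpos
  · exact .inl h0.symm
  -- `β` is the value just below `α`, which was rejected as a threshold
  set B := A.filter (· < α)
  have hB : B.Nonempty := ⟨0, mem_filter.2 ⟨mem_insert_self _ _, hpos⟩⟩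
  set β := B.max' hB
  obtain ⟨hβA, hβα⟩ := mem_filter.1 (B.max'_mem hB)
  have hβ : ρ < ∑ s with β < f s, μ0 s := by
    by_contra! h
    exact (C.min'_le _ (mem_filter.2 ⟨hβA, h⟩)).not_gt hβα
  have hsame : ∀ s, β < f s ↔ α ≤ f s := fun s =>
    ⟨fun h => not_lt.1 fun hlt => (B.le_max' _ (mem_filter.2 ⟨hfA s, hlt⟩)).not_gt h,
      hβα.trans_le⟩
  right
  rw [filter_congr fun s _ => hsame s] at hβ
  exact hβ.le

lemma exists_mem_Icc_interp_eq_min {a b ρ : ℝ} (hab : a ≤ b) (haρ : a ≤ ρ) :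
    ∃ t ∈ Set.Icc (0 : ℝ) 1, (1 - t) * a + t * b = min b ρ := by
  rcases hab.eq_or_lt with rfl | hlt
  · exact ⟨0, ⟨le_rfl, zero_le_one⟩, by simp [min_eq_left haρ]⟩
  have hpos : 0 < b - a := sub_pos.2 hlt
  refine ⟨(min b ρ - a) / (b - a), ⟨div_nonneg (by simp [hab, haρ]) hpos.le, ?_⟩, ?_⟩
  · rw [div_le_one hpos]; linarith [min_le_left b ρ]
  · field_simp; ring

lemma exists_weight_of_threshold {μ0 f : S → ℝ} {ρ α : ℝ} (hμ0 : ∀ s, 0 ≤ μ0 s)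
    (hgt : ∑ s with α < f s, μ0 s ≤ ρ) (hge : α = 0 ∨ ρ ≤ ∑ s with α ≤ f s, μ0 s) :
    ∃ w : S → ℝ, (∀ s, 0 ≤ w s ∧ w s ≤ μ0 s) ∧ (∀ s, α < f s → w s = μ0 s) ∧
      (∀ s, f s < α → w s = 0) ∧ ∑ s, w s ≤ ρ ∧ α * ∑ s, w s = α * ρ := by
  classical
  have hsub : ∑ s with α < f s, μ0 s ≤ ∑ s with α ≤ f s, μ0 s :=
    sum_le_sum_of_subset_of_nonneg (monotone_filter_right _ fun _ _ => le_of_lt)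
      fun s _ _ => hμ0 s
  obtain ⟨t, ⟨ht0, ht1⟩, ht⟩ := exists_mem_Icc_interp_eq_min hsub hgt
  refine ⟨fun s => (1 - t) * (if α < f s then μ0 s else 0) + t * (if α ≤ f s then μ0 s else 0),
    fun s => ?_, fun s h => ?_, fun s h => ?_, ?_⟩
  · have := hμ0 s
    dsimp only
    constructor <;> split_ifs <;> nlinarith
  · simp only [h, h.le, if_true]; ring
  · simp [h.not_gt, h.not_ge]
  have hsum : ∑ s, ((1 - t) * (if α < f s then μ0 s else 0) +
      t * (if α ≤ f s then μ0 s else 0)) = min (∑ s with α ≤ f s, μ0 s) ρ := by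
    rw [sum_add_distrib, ← mul_sum, ← mul_sum, ← sum_filter, ← sum_filter, ht]
  rw [hsum]
  refine ⟨min_le_right _ _, ?_⟩
  rcases hge with rfl | hge
  · simp
  · rw [min_eq_right hge]

lemma sum_sub_mul_eq_sum_mul_min_sub {μ0 w f : S → ℝ} {α : ℝ}
    (hgt : ∀ s, α < f s → w s = μ0 s) (hlt : ∀ s, f s < α → w s = 0) :
    ∑ s, (μ0 s - w s) * f s = ∑ s, μ0 s * min (f s) α - α * ∑ s, w s := by
  rw [mul_sum, ← sum_sub_distrib]
  refine sum_congr rfl fun s _ => ?_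
  rcases lt_trichotomy α (f s) with h | h | h
  · rw [hgt s h, min_eq_right h.le]; ring
  · rw [← h, min_self]; ring
  · rw [hlt s h, min_eq_left h.le]; ring

variable [DecidableEq S]

def moveMass (μ0 w : S → ℝ) (s0 : S) : S → ℝ :=
  μ0 - w + Pi.single s0 (∑ s, w s)

variable {μ0 w : S → ℝ} {s0 : S}

lemma moveMass_nonneg (hw : ∀ s, 0 ≤ w s ∧ w s ≤ μ0 s) (s : S) : 0 ≤ moveMass μ0 w s0 s := by
  have hsingle : 0 ≤ (Pi.single s0 (∑ s, w s) : S → ℝ) s :=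
    (Pi.single_nonneg.2 (sum_nonneg fun s _ => (hw s).1) : (0 : S → ℝ) ≤ _) s
  simp only [moveMass, Pi.add_apply, Pi.sub_apply]
  linarith [(hw s).2]

lemma sum_moveMass : ∑ s, moveMass μ0 w s0 s = ∑ s, μ0 s := by
  simp [moveMass, sum_add_distrib, sum_sub_distrib]

lemma half_sum_abs_moveMass_sub_le (hw : ∀ s, 0 ≤ w s) :
    1 / 2 * ∑ s, |moveMass μ0 w s0 s - μ0 s| ≤ ∑ s, w s := by
  have hpt : ∀ s, |moveMass μ0 w s0 s - μ0 s| ≤ w s + (Pi.single s0 (∑ s, w s) : S → ℝ) s :=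
      fun s => by
    have hsingle : 0 ≤ (Pi.single s0 (∑ s, w s) : S → ℝ) s :=
      (Pi.single_nonneg.2 (sum_nonneg fun s _ => hw s) : (0 : S → ℝ) ≤ _) s
    simp only [moveMass, Pi.add_apply, Pi.sub_apply]
    rw [abs_le]; constructor <;> linarith [hw s]
  have := sum_le_sum fun s (_ : s ∈ univ) => hpt s
  simp only [sum_add_distrib, sum_pi_single', mem_univ, if_true] at this
  linarith

lemma sum_moveMass_mul (V : S → ℝ) :
    ∑ s, moveMass μ0 w s0 s * V s = ∑ s, (μ0 s - w s) * V s + (∑ s, w s) * V s0 := by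
  simp [moveMass, add_mul, sum_add_distrib, Pi.single_apply]

end

theorem tv_duality_fail_state_general {S : Type*} [Fintype S]
    (H ρ : ℝ) (hH : 0 < H) (hρ : 0 ≤ ρ)
    (μ0 : S → ℝ) (hμ0 : ∀ s, 0 ≤ μ0 s) (hμ0sum : ∑ s, μ0 s = 1)
    (V : S → ℝ) (hV0 : ∀ s, 0 ≤ V s) (hVH : ∀ s, V s ≤ H)
    (hmin : ∃ s, V s = 0) :
    sInf {x : ℝ | ∃ μ : S → ℝ, (∀ s, 0 ≤ μ s) ∧ (∑ s, μ s = 1) ∧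
        (1/2) * (∑ s, |μ s - μ0 s|) ≤ ρ ∧ x = ∑ s, μ s * V s}
      = sSup {y : ℝ | ∃ α : ℝ, 0 ≤ α ∧ α ≤ H ∧
        y = (∑ s, μ0 s * min (V s) α) - ρ * α} := by
  classical
  obtain ⟨s0, hs0⟩ := hmin
  obtain ⟨α, hαrange, hgt, hge⟩ := exists_threshold μ0 V hρ hV0
  obtain ⟨w, hw, hwgt, hwlt, hwρ, hαw⟩ := exists_weight_of_threshold hμ0 hgt hge
  have hα0 : 0 ≤ α := by rcases hαrange with rfl | ⟨s, rfl⟩; exacts [le_rfl, hV0 s]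
  have hαH : α ≤ H := by rcases hαrange with rfl | ⟨s, rfl⟩; exacts [hH.le, hVH s]
  set μ := moveMass μ0 w s0
  have hμsum : ∑ s, μ s = ∑ s, μ0 s := sum_moveMass
  have hμtv : 1 / 2 * ∑ s, |μ s - μ0 s| ≤ ρ :=
    (half_sum_abs_moveMass_sub_le fun s => (hw s).1).trans hwρ
  have hμval : ∑ s, μ s * V s = ∑ s, μ0 s * min (V s) α - ρ * α := by
    rw [sum_moveMass_mul, hs0, mul_zero, add_zero, sum_sub_mul_eq_sum_mul_min_sub hwgt hwlt, hαw,
      mul_comm]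
  refine (IsLeast.csInf_eq (a := ∑ s, μ0 s * min (V s) α - ρ * α) ?_).trans
    (IsGreatest.csSup_eq ?_).symm
  · refine ⟨⟨μ, moveMass_nonneg hw, hμsum.trans hμ0sum, hμtv, hμval.symm⟩, ?_⟩
    rintro x ⟨ν, hν, hνsum, hνtv, rfl⟩
    exact sum_mul_min_sub_le_sum_mul hα0 hV0 hν (hνsum.trans hμ0sum.symm) hνtv
  · refine ⟨⟨α, hα0, hαH, rfl⟩, ?_⟩
    rintro y ⟨a, ha, -, rfl⟩
    rw [← hμval]
    exact sum_mul_min_sub_le_sum_mul ha hV0 (moveMass_nonneg hw) hμsum hμtv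

/-- Strong duality for TV uncertainty sets with a fail state (min V = 0):
the robust expectation equals the dual maximization over α ∈ [0,H]. -/
theorem tv_duality_fail_state {S : Type*} [Fintype S] [Nonempty S]
    (H ρ : ℝ) (hH : 0 < H) (hρ : 0 ≤ ρ)
    (μ0 : S → ℝ) (hμ0 : ∀ s, 0 ≤ μ0 s) (hμ0sum : ∑ s, μ0 s = 1)
    (V : S → ℝ) (hV0 : ∀ s, 0 ≤ V s) (hVH : ∀ s, V s ≤ H)
    (hmin : ∃ s, V s = 0) :
    sInf {x : ℝ | ∃ μ : S → ℝ, (∀ s, 0 ≤ μ s) ∧ (∑ s, μ s = 1) ∧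
        (1/2) * (∑ s, |μ s - μ0 s|) ≤ ρ ∧ x = ∑ s, μ s * V s}
      = sSup {y : ℝ | ∃ α : ℝ, 0 ≤ α ∧ α ≤ H ∧
        y = (∑ s, μ0 s * min (V s) α) - ρ * α} :=
  tv_duality_fail_state_general H ρ hH hρ μ0 hμ0 hμ0sum V hV0 hVH hmin
end

section
/- For any probability measure μ⁰ on a finite state space S, uncertainty level ρ ∈ [0,1], and function V : S → [0, H], the infimum over μ ∈ Δ(S) with D_TV(μ‖μ⁰) ≤ ρ of E_{s∼μ}[V(s)] equals max over α ∈ [V_min, V_max] of ( E_{s∼μ⁰}[min(V(s), α)] − ρ(α − min_{s'} min(V(s'), α)) ), where V_min = min_s V(s) and V_max = max_s V(s). -/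
/-!
Weak duality: if `μ` is within TV distance `ρ` of `μ0` and `min V ≤ α`, then
`E_μ V ≥ E_μ min(V, α) ≥ E_μ0 min(V, α) - ρ (α - min V)`, because `min(V, α)` takes values in an
interval of length `α - min V`. Strong duality: at a `ρ`-quantile `α` of `V` under `μ0`, i.e.
`μ0(V > α) ≤ ρ ≤ μ0(V ≥ α)`, removing mass `ρ` from the top of `μ0` (all of `{V > α}` and part of
`{V = α}`) and placing it on a minimiser of `V` gives a measure in the ball attaining this bound.
-/

open Finset

section
variable {S : Type*} [Fintype S]

lemma exists_weighted_quantile [Nonempty S] {β : Type*} [LinearOrder β]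
    (V : S → β) (w : S → ℝ) {ρ : ℝ} (hρ0 : 0 ≤ ρ) (hρ1 : ρ ≤ ∑ s, w s) :
    ∃ a, ∑ s with V a < V s, w s ≤ ρ ∧ ρ ≤ ∑ s with V a ≤ V s, w s := by
  obtain ⟨sM, hsM⟩ := Finite.exists_max V
  have hT : ({a | ∑ s with V a < V s, w s ≤ ρ} : Finset S).Nonempty := by
    refine ⟨sM, mem_filter.2 ⟨mem_univ _, ?_⟩⟩
    rwa [filter_false_of_mem fun s _ => (hsM s).not_gt, sum_empty]
  obtain ⟨a, ha, hmin⟩ := exists_min_image _ V hT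
  refine ⟨a, (mem_filter.1 ha).2, ?_⟩
  by_cases hbelow : ∃ s, V s < V a
  · obtain ⟨b, hb, hbmax⟩ := exists_max_image {s | V s < V a} V
      (by simpa [Finset.Nonempty] using hbelow)
    have hb : V b < V a := (mem_filter.1 hb).2
    have hbρ : ρ < ∑ s with V b < V s, w s := by
      by_contra h
      exact (hmin b (mem_filter.2 ⟨mem_univ _, not_lt.1 h⟩)).not_gt hb
    have hgap : ∀ s ∈ univ, V b < V s ↔ V a ≤ V s := fun s _ =>
      ⟨fun h => not_lt.1 fun h' => (hbmax s (by simpa using h')).not_gt h, hb.trans_le⟩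
    rw [← filter_congr hgap]
    exact hbρ.le
  · push Not at hbelow
    rwa [filter_true_of_mem fun s _ => hbelow s]

lemma tv_weak_duality {ρ α v0 : ℝ} {μ μ0 V : S → ℝ} (hμ : ∀ s, 0 ≤ μ s)
    (hsum : ∑ s, μ s = ∑ s, μ0 s) (htv : ∑ s, |μ s - μ0 s| ≤ 2 * ρ)
    (hv0 : ∀ s, v0 ≤ V s) (hα : v0 ≤ α) :
    ∑ s, μ0 s * min (V s) α - ρ * (α - v0) ≤ ∑ s, μ s * V s := by
  -- `μ` and `μ0` have equal mass, so centring `min V α` on `[v0, α]` costs nothing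
  set f : S → ℝ := fun s => min (V s) α - (v0 + α) / 2
  have hf : ∀ s, |f s| ≤ (α - v0) / 2 := fun s => by
    simp only [f]
    exact abs_le.2 ⟨by linarith [le_min (hv0 s) hα], by linarith [min_le_right (V s) α]⟩
  have hdev : |∑ s, (μ s - μ0 s) * f s| ≤ ρ * (α - v0) :=
    calc |∑ s, (μ s - μ0 s) * f s| ≤ ∑ s, |μ s - μ0 s| * ((α - v0) / 2) :=
          (abs_sum_le_sum_abs _ _).trans <| sum_le_sum fun s _ => by
            rw [abs_mul]; exact mul_le_mul_of_nonneg_left (hf s) (abs_nonneg _)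
      _ ≤ 2 * ρ * ((α - v0) / 2) := by rw [← sum_mul]; gcongr
      _ = ρ * (α - v0) := by ring
  have hshift : ∑ s, (μ s - μ0 s) * f s
      = ∑ s, μ s * min (V s) α - ∑ s, μ0 s * min (V s) α := by
    simp only [f, sub_mul, mul_sub, sum_sub_distrib, ← sum_mul, hsum]
    ring
  calc ∑ s, μ0 s * min (V s) α - ρ * (α - v0)
      ≤ ∑ s, μ s * min (V s) α := by linarith [neg_abs_le (∑ s, (μ s - μ0 s) * f s)]
    _ ≤ ∑ s, μ s * V s := sum_le_sum fun s _ => mul_le_mul_of_nonneg_left (min_le_left _ _) (hμ s)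

lemma exists_removal_at_quantile {μ0 V : S → ℝ} (hμ0 : ∀ s, 0 ≤ μ0 s) {ρ α : ℝ}
    (hlow : ∑ s with α < V s, μ0 s ≤ ρ) (hhigh : ρ ≤ ∑ s with α ≤ V s, μ0 s) :
    ∃ ν : S → ℝ, (∀ s, 0 ≤ ν s ∧ ν s ≤ μ0 s) ∧ ∑ s, ν s = ρ ∧
      (∀ s, α < V s → ν s = μ0 s) ∧ (∀ s, V s < α → ν s = 0) := by
  set g := ∑ s with α < V s, μ0 s
  set m := ∑ s with V s = α, μ0 s
  have hsplit : ∑ s with α ≤ V s, μ0 s = g + m := by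
    simp only [g, m, sum_filter, ← sum_add_distrib]
    refine sum_congr rfl fun s _ => ?_
    rcases lt_trichotomy α (V s) with h | h | h
    · simp [h.le, h, h.ne']
    · simp [h]
    · simp [h.not_ge, h.not_gt, h.ne]
  -- the level set `{V = α}` gives up the fraction `c` of its mass; if it is `μ0`-null then
  -- `ρ = g` and the junk value `c = 0` is right
  set c := (ρ - g) / m
  have hcm : c * m = ρ - g := by
    rcases eq_or_ne m 0 with hm | hm
    · simp only [hm, mul_zero]; linarith
    · exact div_mul_cancel₀ _ hm
  have hc0 : 0 ≤ c := div_nonneg (by linarith) (sum_nonneg fun s _ => hμ0 s)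
  have hc1 : c ≤ 1 := div_le_one_of_le₀ (by linarith) (sum_nonneg fun s _ => hμ0 s)
  refine ⟨fun s => if α < V s then μ0 s else if V s = α then c * μ0 s else 0,
    fun s => ?_, ?_, fun s h => if_pos h, fun s h => by simp [h.not_gt, h.ne]⟩
  · have := hμ0 s
    dsimp only
    split_ifs
    · exact ⟨this, le_rfl⟩
    · exact ⟨mul_nonneg hc0 this, mul_le_of_le_one_left this hc1⟩
    · exact ⟨le_rfl, this⟩
  · rw [sum_ite, sum_ite, sum_const_zero, add_zero, ← mul_sum, filter_filter,
      filter_congr fun s _ => and_iff_right_of_imp fun h : V s = α => h.not_gt]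
    linarith

lemma exists_tv_ball_sum_mul_eq {μ0 V : S → ℝ} (hμ0 : ∀ s, 0 ≤ μ0 s) {ρ α : ℝ}
    (hlow : ∑ s with α < V s, μ0 s ≤ ρ) (hhigh : ρ ≤ ∑ s with α ≤ V s, μ0 s) (s0 : S) :
    ∃ μ : S → ℝ, (∀ s, 0 ≤ μ s) ∧ ∑ s, μ s = ∑ s, μ0 s ∧ ∑ s, |μ s - μ0 s| ≤ 2 * ρ ∧
      ∑ s, μ s * V s = ∑ s, μ0 s * min (V s) α - ρ * (α - V s0) := by
  classical
  obtain ⟨ν, hν, hνsum, hν_above, hν_below⟩ := exists_removal_at_quantile hμ0 hlow hhigh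
  have hρ : 0 ≤ ρ := hνsum ▸ sum_nonneg fun s _ => (hν s).1
  have hδ : ∀ s, 0 ≤ if s = s0 then ρ else 0 := fun s => by split_ifs <;> simp [hρ]
  -- `ν` is exactly the part of `μ0` that `min V α` sees at height `α` instead of `V`
  have hlevel : ∀ s, ν s * V s = μ0 s * (V s - min (V s) α) + ν s * α := fun s => by
    rcases lt_trichotomy (V s) α with h | h | h
    · simp [hν_below s h, min_eq_left h.le]
    · simp [h]
    · rw [hν_above s h, min_eq_right h.le]; ring
  refine ⟨fun s => μ0 s - ν s + if s = s0 then ρ else 0, fun s => ?_, ?_, ?_, ?_⟩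
  · exact add_nonneg (sub_nonneg.2 (hν s).2) (hδ s)
  · simp [sum_add_distrib, sum_sub_distrib, hνsum]
  · calc ∑ s, |μ0 s - ν s + (if s = s0 then ρ else 0) - μ0 s|
        ≤ ∑ s, ((if s = s0 then ρ else 0) + ν s) := sum_le_sum fun s _ => by
          rw [show μ0 s - ν s + (if s = s0 then ρ else 0) - μ0 s
            = (if s = s0 then ρ else 0) - ν s by ring]
          refine (abs_sub _ _).trans_eq ?_
          rw [abs_of_nonneg (hδ s), abs_of_nonneg (hν s).1]
      _ = 2 * ρ := by simp [sum_add_distrib, hνsum, two_mul]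
  · simp only [add_mul, sub_mul, sum_add_distrib, sum_sub_distrib, hlevel, mul_sub, ← sum_mul,
      hνsum, ite_mul, zero_mul, sum_ite_eq', mem_univ, if_true]
    ring
end

lemma csInf_eq_csSup_of_forall_le {α : Type*} [ConditionallyCompleteLattice α] {L R : Set α}
    {z : α} (hLR : ∀ x ∈ L, ∀ y ∈ R, y ≤ x) (hzL : z ∈ L) (hzR : z ∈ R) : sInf L = sSup R :=
  (IsLeast.csInf_eq ⟨hzL, fun x hx => hLR x hx z hzR⟩).trans
    (IsGreatest.csSup_eq ⟨hzR, fun y hy => hLR z hzL y hy⟩).symm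

theorem tv_duality_general_general {S : Type*} [Fintype S] [Nonempty S]
    (ρ : ℝ) (hρ0 : 0 ≤ ρ) (hρ1 : ρ ≤ 1)
    (μ0 : S → ℝ) (hμ0 : ∀ s, 0 ≤ μ0 s) (hμ0sum : ∑ s, μ0 s = 1)
    (V : S → ℝ) :
    sInf {x : ℝ | ∃ μ : S → ℝ, (∀ s, 0 ≤ μ s) ∧ (∑ s, μ s = 1) ∧
        (1/2) * (∑ s, |μ s - μ0 s|) ≤ ρ ∧ x = ∑ s, μ s * V s}
      = sSup {y : ℝ | ∃ α : ℝ, (⨅ s, V s) ≤ α ∧ α ≤ (⨆ s, V s) ∧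
        y = (∑ s, μ0 s * min (V s) α)
            - ρ * (α - ⨅ s', min (V s') α)} := by
  obtain ⟨s0, hs0⟩ := exists_eq_ciInf_of_finite (f := V)
  have hmin : ∀ s, V s0 ≤ V s := fun s => hs0 ▸ ciInf_le (Finite.bddBelow_range V) s
  have hinf_min : ∀ α, V s0 ≤ α → ⨅ s, min (V s) α = V s0 := fun α hα =>
    le_antisymm (ciInf_le_of_le (Finite.bddBelow_range _) s0 (min_le_left _ _))
      (le_ciInf fun s => le_min (hmin s) hα)
  obtain ⟨a, hlow, hhigh⟩ := exists_weighted_quantile V μ0 hρ0 (hμ0sum ▸ hρ1)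
  obtain ⟨μ, hμ, hμsum, htv, hval⟩ := exists_tv_ball_sum_mul_eq (V := V) hμ0 hlow hhigh s0
  refine csInf_eq_csSup_of_forall_le ?_ ⟨μ, hμ, hμsum.trans hμ0sum, by linarith, hval.symm⟩
    ⟨V a, hs0 ▸ hmin a, le_ciSup (Finite.bddAbove_range V) a, by rw [hinf_min _ (hmin a)]⟩
  rintro _ ⟨ν, hν, hνsum, hνtv, rfl⟩ _ ⟨α, hα, -, rfl⟩
  rw [← hs0] at hα
  rw [hinf_min α hα]
  exact tv_weak_duality hν (hνsum.trans hμ0sum.symm) (by linarith) hmin hα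

/-- Strong duality for TV uncertainty sets (general form, Prop. 3 of the paper). -/
theorem tv_duality_general {S : Type*} [Fintype S] [Nonempty S]
    (H ρ : ℝ) (hH : 0 < H) (hρ0 : 0 ≤ ρ) (hρ1 : ρ ≤ 1)
    (μ0 : S → ℝ) (hμ0 : ∀ s, 0 ≤ μ0 s) (hμ0sum : ∑ s, μ0 s = 1)
    (V : S → ℝ) (hV0 : ∀ s, 0 ≤ V s) (hVH : ∀ s, V s ≤ H) :
    sInf {x : ℝ | ∃ μ : S → ℝ, (∀ s, 0 ≤ μ s) ∧ (∑ s, μ s = 1) ∧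
        (1/2) * (∑ s, |μ s - μ0 s|) ≤ ρ ∧ x = ∑ s, μ s * V s}
      = sSup {y : ℝ | ∃ α : ℝ, (⨅ s, V s) ≤ α ∧ α ≤ (⨆ s, V s) ∧
        y = (∑ s, μ0 s * min (V s) α)
            - ρ * (α - ⨅ s', min (V s') α)} :=
  tv_duality_general_general ρ hρ0 hρ1 μ0 hμ0 hμ0sum V
end

section
/- Let φ₁, …, φₜ ∈ ℝᵈ and λ > 0, and set Λₜ = λ I + Σ_{i=1}^t φᵢ φᵢᵀ. Then Σ_{i=1}^t φᵢᵀ Λₜ⁻¹ φᵢ ≤ d. -/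
open Matrix

lemma posSemidef_vecMulVec_self {d : ℕ} (v : Fin d → ℝ) :
    (vecMulVec v v).PosSemidef := by
  have h : vecMulVec v v = (replicateRow Unit v)ᴴ * replicateRow Unit v := by
    rw [vecMulVec_eq Unit, conjTranspose_replicateRow, star_trivial]
  rw [h]
  exact posSemidef_conjTranspose_mul_self _

lemma trace_mul_vecMulVec {d : ℕ} (M : Matrix (Fin d) (Fin d) ℝ) (v : Fin d → ℝ) :
    (M * vecMulVec v v).trace = v ⬝ᵥ (M *ᵥ v) := by
  simp only [trace, diag, mul_apply, vecMulVec_apply, dotProduct, mulVec, Finset.mul_sum]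
  congr 1; ext i; congr 1; ext j; ring

lemma posDef_smul_one {d : ℕ} {lam : ℝ} (hlam : 0 < lam) :
    (lam • (1 : Matrix (Fin d) (Fin d) ℝ)).PosDef := by
  exact PosDef.one.smul hlam

lemma posSemidef_trace_nonneg {d : ℕ} {M : Matrix (Fin d) (Fin d) ℝ}
    (hM : M.PosSemidef) : 0 ≤ M.trace := by
  have h : ∀ i, 0 ≤ M i i := by
    intro i
    exact hM.diag_nonneg
  exact Finset.sum_nonneg fun i _ => h i

/-- Elliptical potential bound: Σᵢ φᵢᵀ Λₜ⁻¹ φᵢ ≤ d where Λₜ = λI + Σᵢ φᵢφᵢᵀ. -/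
theorem sum_quadratic_inv_le_dim {d t : ℕ} (lam : ℝ) (hlam : 0 < lam)
    (φ : Fin t → Fin d → ℝ) :
    (∑ i, φ i ⬝ᵥ ((lam • (1 : Matrix (Fin d) (Fin d) ℝ)
        + ∑ j, vecMulVec (φ j) (φ j))⁻¹ *ᵥ φ i)) ≤ (d : ℝ) := by
  set S : Matrix (Fin d) (Fin d) ℝ := ∑ j, vecMulVec (φ j) (φ j) with hSdef
  have hSpsd : S.PosSemidef :=
    Finset.sum_induction _ _ (fun a b ha hb => ha.add hb) .zero
      (fun j _ => posSemidef_vecMulVec_self (φ j))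
  have hΛ : (lam • 1 + S).PosDef := (posDef_smul_one hlam).add_posSemidef hSpsd
  have hinv : ((lam • 1 + S)⁻¹).PosDef := hΛ.inv
  have hΛinv : (lam • 1 + S)⁻¹ * (lam • 1 + S) = 1 :=
    nonsing_inv_mul _ hΛ.det_pos.ne'.isUnit
  have key : (∑ i, φ i ⬝ᵥ ((lam • 1 + S)⁻¹ *ᵥ φ i))
      = ((lam • 1 + S)⁻¹ * S).trace := by
    rw [hSdef, Matrix.mul_sum, trace_sum]
    exact Finset.sum_congr rfl fun i _ => (trace_mul_vecMulVec _ _).symm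
  have expand : (lam • 1 + S)⁻¹ * S
      = 1 - lam • (lam • 1 + S)⁻¹ := by
    have : (lam • 1 + S)⁻¹ * (lam • 1 + S)
        = lam • (lam • 1 + S)⁻¹ + (lam • 1 + S)⁻¹ * S := by
      rw [Matrix.mul_add]
      congr 1
      rw [Matrix.mul_smul, Matrix.mul_one]
    rw [hΛinv] at this
    linear_combination (norm := abel) this.symm
  rw [key, expand, trace_sub, trace_one, trace_smul]
  have htr : 0 ≤ ((lam • 1 + S)⁻¹).trace := posSemidef_trace_nonneg hinv.posSemidef
  have : 0 ≤ lam * ((lam • 1 + S)⁻¹).trace := mul_nonneg hlam.le htr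
  simp only [smul_eq_mul, Finset.card_univ, Fintype.card_fin]
  linarith
end

section
/- Let w₁, w₂ ∈ ℝᵈ and let A₁, A₂ be symmetric positive semidefinite d×d matrices. Define, for each probability vector φ ∈ ℝᵈ (φᵢ ≥ 0, Σᵢ φᵢ = 1), f_j(φ) = w_jᵀ φ + Σ_{i=1}^d √( φᵢ² (A_j)_{ii} ) for j = 1, 2. Then sup over probability vectors φ of |f₁(φ) − f₂(φ)| ≤ ‖w₁ − w₂‖₂ + √(‖A₁ − A₂‖_F). -/
open Matrix

private lemma sqrt_add_le' (x y : ℝ) (hx : 0 ≤ x) (hy : 0 ≤ y) :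
    Real.sqrt (x + y) ≤ Real.sqrt x + Real.sqrt y := by
  have h1 := Real.sq_sqrt hx
  have h2 := Real.sq_sqrt hy
  have h3 := Real.sqrt_nonneg x
  have h4 := Real.sqrt_nonneg y
  have h : x + y ≤ (Real.sqrt x + Real.sqrt y) ^ 2 := by nlinarith
  calc Real.sqrt (x + y) ≤ Real.sqrt ((Real.sqrt x + Real.sqrt y) ^ 2) :=
        Real.sqrt_le_sqrt h
    _ = Real.sqrt x + Real.sqrt y := Real.sqrt_sq (by positivity)

private lemma abs_sqrt_sub_sqrt (x y : ℝ) (hx : 0 ≤ x) (hy : 0 ≤ y) :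
    |Real.sqrt x - Real.sqrt y| ≤ Real.sqrt |x - y| := by
  rw [abs_sub_le_iff]
  constructor
  · have h : Real.sqrt x ≤ Real.sqrt y + Real.sqrt |x - y| := by
      calc Real.sqrt x ≤ Real.sqrt (y + |x - y|) := by
            apply Real.sqrt_le_sqrt
            have := le_abs_self (x - y); linarith
        _ ≤ Real.sqrt y + Real.sqrt |x - y| := sqrt_add_le' _ _ hy (abs_nonneg _)
    linarith
  · have h : Real.sqrt y ≤ Real.sqrt x + Real.sqrt |x - y| := by
      calc Real.sqrt y ≤ Real.sqrt (x + |x - y|) := by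
            apply Real.sqrt_le_sqrt
            have := neg_abs_le (x - y); linarith
        _ ≤ Real.sqrt x + Real.sqrt |x - y| := sqrt_add_le' _ _ hx (abs_nonneg _)
    linarith

/-- Lipschitz bound on the parametric value-function class: the uniform distance
between two functions of the class is at most ‖w₁ − w₂‖₂ + √‖A₁ − A₂‖_F. -/
theorem value_class_lipschitz {d : ℕ}
    (w₁ w₂ : Fin d → ℝ) (A₁ A₂ : Matrix (Fin d) (Fin d) ℝ)
    (hA₁ : A₁.PosSemidef) (hA₂ : A₂.PosSemidef) :
    ∀ φ : Fin d → ℝ, (∀ i, 0 ≤ φ i) → (∑ i, φ i = 1) →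
      |((∑ i, w₁ i * φ i) + ∑ i, Real.sqrt ((φ i) ^ 2 * A₁ i i))
          - ((∑ i, w₂ i * φ i) + ∑ i, Real.sqrt ((φ i) ^ 2 * A₂ i i))|
        ≤ Real.sqrt (∑ i, (w₁ i - w₂ i) ^ 2)
          + Real.sqrt (Real.sqrt (∑ i, ∑ j, (A₁ i j - A₂ i j) ^ 2)) := by
  intro φ hφ hsum
  have hdiag : ∀ (A : Matrix (Fin d) (Fin d) ℝ), A.PosSemidef → ∀ i, 0 ≤ A i i := by
    intro A hA i
    exact hA.diag_nonneg
  -- Part 1: linear term, Cauchy–Schwarz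
  have h1 : |(∑ i, w₁ i * φ i) - (∑ i, w₂ i * φ i)|
      ≤ Real.sqrt (∑ i, (w₁ i - w₂ i) ^ 2) := by
    have hrw : (∑ i, w₁ i * φ i) - (∑ i, w₂ i * φ i)
        = ∑ i, (w₁ i - w₂ i) * φ i := by
      rw [← Finset.sum_sub_distrib]; congr 1; ext i; ring
    rw [hrw]
    have hφ2 : (∑ i, (φ i) ^ 2) ≤ 1 := by
      calc (∑ i, (φ i) ^ 2) ≤ (∑ i, φ i) ^ 2 :=
            Finset.sum_sq_le_sq_sum_of_nonneg (fun i _ => hφ i)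
        _ = 1 := by rw [hsum]; norm_num
    have hb : (∑ i, (w₁ i - w₂ i) * φ i) ^ 2 ≤ ∑ i, (w₁ i - w₂ i) ^ 2 := by
      calc (∑ i, (w₁ i - w₂ i) * φ i) ^ 2
          ≤ (∑ i, (w₁ i - w₂ i) ^ 2) * ∑ i, (φ i) ^ 2 :=
            Finset.sum_mul_sq_le_sq_mul_sq Finset.univ _ _
        _ ≤ (∑ i, (w₁ i - w₂ i) ^ 2) * 1 :=
            mul_le_mul_of_nonneg_left hφ2 (by positivity)
        _ = ∑ i, (w₁ i - w₂ i) ^ 2 := mul_one _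
    calc |∑ i, (w₁ i - w₂ i) * φ i|
        = Real.sqrt ((∑ i, (w₁ i - w₂ i) * φ i) ^ 2) := (Real.sqrt_sq_eq_abs _).symm
      _ ≤ Real.sqrt (∑ i, (w₁ i - w₂ i) ^ 2) := Real.sqrt_le_sqrt hb
  -- Part 2: sqrt terms
  set F : ℝ := Real.sqrt (∑ i, ∑ j, (A₁ i j - A₂ i j) ^ 2) with hF
  have hFnn : 0 ≤ F := Real.sqrt_nonneg _
  have h2 : |(∑ i, Real.sqrt ((φ i) ^ 2 * A₁ i i))
      - (∑ i, Real.sqrt ((φ i) ^ 2 * A₂ i i))| ≤ Real.sqrt F := by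
    rw [← Finset.sum_sub_distrib]
    calc |∑ i, (Real.sqrt ((φ i) ^ 2 * A₁ i i) - Real.sqrt ((φ i) ^ 2 * A₂ i i))|
        ≤ ∑ i, |Real.sqrt ((φ i) ^ 2 * A₁ i i) - Real.sqrt ((φ i) ^ 2 * A₂ i i)| :=
          Finset.abs_sum_le_sum_abs _ _
      _ ≤ ∑ i, φ i * Real.sqrt F := by
          apply Finset.sum_le_sum
          intro i _
          have hterm : |Real.sqrt ((φ i) ^ 2 * A₁ i i) - Real.sqrt ((φ i) ^ 2 * A₂ i i)|
              ≤ Real.sqrt |(φ i) ^ 2 * A₁ i i - (φ i) ^ 2 * A₂ i i| :=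
            abs_sqrt_sub_sqrt _ _ (by have := hdiag A₁ hA₁ i; positivity)
              (by have := hdiag A₂ hA₂ i; positivity)
          have heq : |(φ i) ^ 2 * A₁ i i - (φ i) ^ 2 * A₂ i i|
              = (φ i) ^ 2 * |A₁ i i - A₂ i i| := by
            rw [← mul_sub, abs_mul, abs_of_nonneg (by positivity : (0:ℝ) ≤ (φ i)^2)]
          have hdF : |A₁ i i - A₂ i i| ≤ F := by
            rw [hF]
            have : |A₁ i i - A₂ i i| = Real.sqrt ((A₁ i i - A₂ i i) ^ 2) :=
              (Real.sqrt_sq_eq_abs _).symm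
            rw [this]
            apply Real.sqrt_le_sqrt
            calc (A₁ i i - A₂ i i) ^ 2 ≤ ∑ j, (A₁ i j - A₂ i j) ^ 2 :=
                  Finset.single_le_sum (f := fun j => (A₁ i j - A₂ i j) ^ 2)
                    (fun j _ => by positivity) (Finset.mem_univ i)
              _ ≤ ∑ i', ∑ j, (A₁ i' j - A₂ i' j) ^ 2 :=
                  Finset.single_le_sum (f := fun i' => ∑ j, (A₁ i' j - A₂ i' j) ^ 2)
                    (fun i' _ => Finset.sum_nonneg fun j _ => by positivity)
                    (Finset.mem_univ i)
          calc |Real.sqrt ((φ i) ^ 2 * A₁ i i) - Real.sqrt ((φ i) ^ 2 * A₂ i i)|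
              ≤ Real.sqrt ((φ i) ^ 2 * |A₁ i i - A₂ i i|) := by rw [← heq]; exact hterm
            _ = φ i * Real.sqrt |A₁ i i - A₂ i i| := by
                rw [Real.sqrt_mul (by positivity), Real.sqrt_sq (hφ i)]
            _ ≤ φ i * Real.sqrt F :=
                mul_le_mul_of_nonneg_left (Real.sqrt_le_sqrt hdF) (hφ i)
      _ = Real.sqrt F := by rw [← Finset.sum_mul, hsum, one_mul]
  calc |((∑ i, w₁ i * φ i) + ∑ i, Real.sqrt ((φ i) ^ 2 * A₁ i i))
          - ((∑ i, w₂ i * φ i) + ∑ i, Real.sqrt ((φ i) ^ 2 * A₂ i i))|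
      = |((∑ i, w₁ i * φ i) - (∑ i, w₂ i * φ i))
          + ((∑ i, Real.sqrt ((φ i) ^ 2 * A₁ i i))
            - (∑ i, Real.sqrt ((φ i) ^ 2 * A₂ i i)))| := by ring_nf
    _ ≤ |(∑ i, w₁ i * φ i) - (∑ i, w₂ i * φ i)|
          + |(∑ i, Real.sqrt ((φ i) ^ 2 * A₁ i i))
            - (∑ i, Real.sqrt ((φ i) ^ 2 * A₂ i i))| := abs_add_le _ _
    _ ≤ Real.sqrt (∑ i, (w₁ i - w₂ i) ^ 2) + Real.sqrt F := add_le_add h1 h2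
end
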